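/- arXiv:2304.11754 — 2 statements merged into one kernel-verified Lean document; each statement's English description precedes it below -/
import Mathlib

section
/- The surrogate function ℓ(θ) = −θ Σ_i C_1^i U_i + Σ_i C_2^i (log θ − θ U_i) + Σ_i C_3^i log(1 − e^{−θ U_i}), with U_i > 0, nonnegative weights, and Σ_i C_2^i > 0, is strictly concave in θ on (0, ∞), hence has at most one maximizer. -/
open Real Finset

private lemma concaveOn_linear (c : ℝ) (s : Set ℝ) (hs : Convex ℝ s) :
    ConcaveOn ℝ s (fun θ : ℝ => c * θ) :=
  ⟨hs, fun x _ y _ a b _ _ _ => by simp only [smul_eq_mul]; exact le_of_eq (by ring)⟩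

private lemma StrictConcaveOn.const_mul {s : Set ℝ} {f : ℝ → ℝ} (hf : StrictConcaveOn ℝ s f)
    {c : ℝ} (hc : 0 < c) : StrictConcaveOn ℝ s (fun x => c * f x) :=
  ⟨hf.1, fun x hx y hy hxy a b ha hb hab => by
    have h := hf.2 hx hy hxy ha hb hab
    simp only [smul_eq_mul] at h ⊢
    nlinarith⟩

private lemma concaveOn_comp_mono {s t : Set ℝ} {f g : ℝ → ℝ} (hg : ConcaveOn ℝ t g)
    (hf : ConcaveOn ℝ s f) (hst : ∀ x ∈ s, f x ∈ t) (hg' : MonotoneOn g t) :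
    ConcaveOn ℝ s (fun x => g (f x)) := by
  refine ⟨hf.1, fun x hx y hy a b ha hb hab => ?_⟩
  have h1 : a • f x + b • f y ≤ f (a • x + b • y) := hf.2 hx hy ha hb hab
  have hm1 : a • f x + b • f y ∈ t := hg.1 (hst _ hx) (hst _ hy) ha hb hab
  have hm2 : f (a • x + b • y) ∈ t := hst _ (hf.1 hx hy ha hb hab)
  exact (hg.2 (hst _ hx) (hst _ hy) ha hb hab).trans (hg' hm1 hm2 h1)

private lemma concave_one_sub_exp (c : ℝ) :
    ConcaveOn ℝ (Set.Ioi (0 : ℝ)) (fun θ : ℝ => 1 - Real.exp (-(θ * c))) := by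
  refine ⟨convex_Ioi 0, fun x _ y _ a b ha hb hab => ?_⟩
  have h := convexOn_exp.2 (Set.mem_univ (-(x * c))) (Set.mem_univ (-(y * c))) ha hb hab
  simp only [smul_eq_mul] at h ⊢
  have he : a * -(x * c) + b * -(y * c) = -((a * x + b * y) * c) := by ring
  rw [he] at h
  nlinarith

private lemma concaveOn_finset_sum {ι : Type*} (t : Finset ι) {s : Set ℝ} (hs : Convex ℝ s)
    {f : ι → ℝ → ℝ} (h : ∀ i ∈ t, ConcaveOn ℝ s (f i)) :
    ConcaveOn ℝ s (fun x => ∑ i ∈ t, f i x) := by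
  induction t using Finset.cons_induction with
  | empty => simpa using concaveOn_const (0 : ℝ) hs
  | cons i t hi ih =>
      simp only [Finset.sum_cons]
      exact (h i (Finset.mem_cons_self _ _)).add
        (ih fun j hj => h j (Finset.mem_cons.2 (Or.inr hj)))

/-- The EM surrogate objective in `θ` is strictly concave on `(0, ∞)` (when `Σ C₂ⁱ > 0`),
hence has at most one maximizer there. -/
theorem surrogate_strictConcave_unique_max
    (n : ℕ) (U C1 C2 C3 : Fin n → ℝ)
    (hU : ∀ i, 0 < U i)
    (hC1 : ∀ i, 0 ≤ C1 i) (hC2 : ∀ i, 0 ≤ C2 i) (hC3 : ∀ i, 0 ≤ C3 i)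
    (hpos : 0 < ∑ i, C2 i) :
    StrictConcaveOn ℝ (Set.Ioi (0 : ℝ))
      (fun θ : ℝ =>
        -θ * ∑ i, C1 i * U i
        + ∑ i, C2 i * (Real.log θ - θ * U i)
        + ∑ i, C3 i * Real.log (1 - Real.exp (-(θ * U i)))) ∧
    ∀ a ∈ Set.Ioi (0 : ℝ), ∀ b ∈ Set.Ioi (0 : ℝ),
      IsMaxOn (fun θ : ℝ =>
        -θ * ∑ i, C1 i * U i
        + ∑ i, C2 i * (Real.log θ - θ * U i)
        + ∑ i, C3 i * Real.log (1 - Real.exp (-(θ * U i)))) (Set.Ioi (0 : ℝ)) a →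
      IsMaxOn (fun θ : ℝ =>
        -θ * ∑ i, C1 i * U i
        + ∑ i, C2 i * (Real.log θ - θ * U i)
        + ∑ i, C3 i * Real.log (1 - Real.exp (-(θ * U i)))) (Set.Ioi (0 : ℝ)) b →
      a = b := by
  -- each left-censored term is concave
  have hterm : ∀ i : Fin n, ConcaveOn ℝ (Set.Ioi (0 : ℝ))
      (fun θ : ℝ => C3 i * Real.log (1 - Real.exp (-(θ * U i)))) := by
    intro i
    have hcomp : ConcaveOn ℝ (Set.Ioi (0 : ℝ))
        (fun θ : ℝ => Real.log (1 - Real.exp (-(θ * U i)))) := by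
      refine concaveOn_comp_mono strictConcaveOn_log_Ioi.concaveOn
        (concave_one_sub_exp (U i)) (fun x hx => ?_) Real.strictMonoOn_log.monotoneOn
      have hx0 : (0 : ℝ) < x := hx
      have : Real.exp (-(x * U i)) < 1 := by
        rw [Real.exp_lt_one_iff]
        have := mul_pos hx0 (hU i)
        linarith
      rw [Set.mem_Ioi]
      linarith
    have := hcomp.smul (hC3 i)
    simpa [smul_eq_mul] using this
  have key : StrictConcaveOn ℝ (Set.Ioi (0 : ℝ))
      (fun θ : ℝ => (∑ i, C2 i) * Real.log θ
        + ((-(∑ i, C1 i * U i) - ∑ i, C2 i * U i) * θ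
          + ∑ i, C3 i * Real.log (1 - Real.exp (-(θ * U i))))) :=
    (strictConcaveOn_log_Ioi.const_mul hpos).add_concaveOn
      ((concaveOn_linear _ _ (convex_Ioi 0)).add
        (concaveOn_finset_sum _ (convex_Ioi 0) (fun i _ => hterm i)))
  have hsum : ∀ θ : ℝ, ∑ i, C2 i * (Real.log θ - θ * U i)
      = (∑ i, C2 i) * Real.log θ - θ * ∑ i, C2 i * U i := by
    intro θ
    simp only [mul_sub, Finset.sum_sub_distrib, ← Finset.sum_mul]
    congr 1
    rw [Finset.mul_sum]
    exact Finset.sum_congr rfl fun i _ => by ring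
  have hfun : (fun θ : ℝ =>
        -θ * ∑ i, C1 i * U i
        + ∑ i, C2 i * (Real.log θ - θ * U i)
        + ∑ i, C3 i * Real.log (1 - Real.exp (-(θ * U i))))
      = (fun θ : ℝ => (∑ i, C2 i) * Real.log θ
        + ((-(∑ i, C1 i * U i) - ∑ i, C2 i * U i) * θ
          + ∑ i, C3 i * Real.log (1 - Real.exp (-(θ * U i))))) := by
    funext θ
    rw [hsum θ]
    ring
  rw [hfun]
  exact ⟨key, fun a ha b hb hma hmb => key.eq_of_isMaxOn hma hmb ha hb⟩
end

section
/- Consider the score function h(θ) = θ·A + B + θ·Σ_i c_i·U_i e^{−θU_i}/(1 − e^{−θU_i}), where A = Σ_i (c_i − 1)U_i < 0, B = Σ_i b_i > 0, U_i > 0, and c_i, b_i ≥ 0 with c_i ≤ 1 and not all c_i = 1. Then h(θ) = 0 has a unique solution θ* ∈ (0, ∞). -/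
open Real Finset

noncomputable def psiMstep (x : ℝ) : ℝ := x * Real.exp (-x) / (1 - Real.exp (-x))

noncomputable def dpsiMstep (x : ℝ) : ℝ :=
  ((1 - x) * Real.exp (-x) * (1 - Real.exp (-x)) - x * Real.exp (-x) * Real.exp (-x))
    / (1 - Real.exp (-x)) ^ 2

lemma denom_pos_mstep {x : ℝ} (hx : 0 < x) : 0 < 1 - Real.exp (-x) := by
  have : Real.exp (-x) < 1 := Real.exp_lt_one_iff.mpr (by linarith)
  linarith

lemma psi_pos_mstep {x : ℝ} (hx : 0 < x) : 0 < psiMstep x := by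
  have h := denom_pos_mstep hx
  exact div_pos (mul_pos hx (Real.exp_pos _)) h

lemma psi_lt_one_mstep {x : ℝ} (hx : 0 < x) : psiMstep x < 1 := by
  have h := denom_pos_mstep hx
  rw [psiMstep, div_lt_one h]
  have h2 : x + 1 < Real.exp x := Real.add_one_lt_exp (ne_of_gt hx)
  have hu : Real.exp (-x) * Real.exp x = 1 := by rw [← Real.exp_add]; simp
  nlinarith [Real.exp_pos (-x), Real.exp_pos x]

lemma hasDerivAt_psi_mstep {x : ℝ} (hx : 0 < x) :
    HasDerivAt psiMstep (dpsiMstep x) x := by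
  have hexp : HasDerivAt (fun y : ℝ => Real.exp (-y)) (-Real.exp (-x)) x := by
    have := (Real.hasDerivAt_exp (-x)).comp x (hasDerivAt_neg x)
    simpa [Function.comp_def] using this
  have hN : HasDerivAt (fun y : ℝ => y * Real.exp (-y)) ((1 - x) * Real.exp (-x)) x := by
    have := (hasDerivAt_id x).fun_mul hexp
    exact this.congr_deriv (by simp only [id_eq]; ring)
  have hD : HasDerivAt (fun y : ℝ => 1 - Real.exp (-y)) (Real.exp (-x)) x := by
    have := (hasDerivAt_const x (1:ℝ)).fun_sub hexp
    exact this.congr_deriv (by ring)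
  have hD0 : (1 - Real.exp (-x)) ≠ 0 := ne_of_gt (denom_pos_mstep hx)
  have := hN.div hD hD0
  exact this

lemma dpsi_neg_mstep {x : ℝ} (hx : 0 < x) : dpsiMstep x < 0 := by
  have h := denom_pos_mstep hx
  apply div_neg_of_neg_of_pos _ (by positivity)
  have h2 : 1 - x < Real.exp (-x) := by
    have := Real.add_one_lt_exp (neg_ne_zero.mpr (ne_of_gt hx))
    linarith
  nlinarith [Real.exp_pos (-x)]

lemma dpsi_gt_neg_one_mstep {x : ℝ} (hx : 0 < x) : -1 < dpsiMstep x := by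
  have h := denom_pos_mstep hx
  rw [dpsiMstep, lt_div_iff₀ (by positivity)]
  have h2 : x + 1 < Real.exp x := Real.add_one_lt_exp (ne_of_gt hx)
  have hu : Real.exp (-x) * Real.exp x = 1 := by rw [← Real.exp_add]; simp
  nlinarith [Real.exp_pos (-x), Real.exp_pos x]

/-- The M-step score equation for `θ` has a unique positive solution: with
`A = Σ (cᵢ - 1) Uᵢ < 0`, `B = Σ bᵢ > 0`, `Uᵢ > 0`, `0 ≤ cᵢ ≤ 1` not all equal to `1`,
and `bᵢ ≥ 0`, the equation
`θ A + B + θ Σ cᵢ Uᵢ e^{-θ Uᵢ}/(1 - e^{-θ Uᵢ}) = 0` has a unique solution `θ* > 0`. -/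
theorem score_equation_unique_root
    (n : ℕ) (U c b : Fin n → ℝ)
    (hU : ∀ i, 0 < U i)
    (hc : ∀ i, c i ∈ Set.Icc (0 : ℝ) 1)
    (hcne : ∃ i, c i < 1)
    (hb : ∀ i, 0 ≤ b i)
    (hA : (∑ i, (c i - 1) * U i) < 0)
    (hB : 0 < ∑ i, b i) :
    ∃! θ : ℝ, 0 < θ ∧
      θ * (∑ i, (c i - 1) * U i) + (∑ i, b i)
        + θ * ∑ i, c i * (U i * Real.exp (-(θ * U i)) / (1 - Real.exp (-(θ * U i)))) = 0 := by
  have hne : Nonempty (Fin n) := ⟨hcne.choose⟩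
  set A : ℝ := ∑ i, (c i - 1) * U i with hAdef
  set B : ℝ := ∑ i, b i with hBdef
  set G : ℝ → ℝ := fun θ => θ * A + B + ∑ i, c i * psiMstep (θ * U i) with hGdef
  -- the score function coincides with G
  have hFG : ∀ θ : ℝ,
      θ * A + B + θ * ∑ i, c i * (U i * Real.exp (-(θ * U i)) / (1 - Real.exp (-(θ * U i))))
        = G θ := by
    intro θ
    have h : θ * ∑ i, c i * (U i * Real.exp (-(θ * U i)) / (1 - Real.exp (-(θ * U i))))
        = ∑ i, c i * psiMstep (θ * U i) := by
      rw [Finset.mul_sum]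
      refine Finset.sum_congr rfl fun i _ => ?_
      simp only [psiMstep]
      ring
    rw [h]
  -- derivative of G
  have hG' : ∀ θ : ℝ, 0 < θ →
      HasDerivAt G (A + ∑ i, c i * (dpsiMstep (θ * U i) * U i)) θ := by
    intro θ hθ
    have h1 : HasDerivAt (fun θ : ℝ => θ * A + B) A θ := by
      simpa using ((hasDerivAt_id θ).mul_const A).add_const B
    have h2 : HasDerivAt (fun θ : ℝ => ∑ i, c i * psiMstep (θ * U i))
        (∑ i, c i * (dpsiMstep (θ * U i) * U i)) θ := by
      apply HasDerivAt.fun_sum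
      intro i _
      have hin : HasDerivAt (fun θ : ℝ => θ * U i) (U i) θ := by
        simpa using (hasDerivAt_id θ).mul_const (U i)
      have hx : 0 < θ * U i := mul_pos hθ (hU i)
      have := ((hasDerivAt_psi_mstep hx).comp θ hin).const_mul (c i)
      simpa [Function.comp] using this
    simpa using h1.fun_add h2
  -- derivative is negative
  have hG'neg : ∀ θ : ℝ, 0 < θ → A + ∑ i, c i * (dpsiMstep (θ * U i) * U i) < 0 := by
    intro θ hθ
    rw [hAdef, ← Finset.sum_add_distrib]
    have : ∀ i ∈ Finset.univ, (c i - 1) * U i + c i * (dpsiMstep (θ * U i) * U i) < 0 := by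
      intro i _
      have hx : 0 < θ * U i := mul_pos hθ (hU i)
      have hd1 := dpsi_neg_mstep hx
      have hd2 := dpsi_gt_neg_one_mstep hx
      have hci := hc i
      simp only [Set.mem_Icc] at hci
      have h3 : c i * (1 + dpsiMstep (θ * U i)) ≤ 1 + dpsiMstep (θ * U i) :=
        mul_le_of_le_one_left (by linarith) hci.2
      have h4 : U i * (c i * (1 + dpsiMstep (θ * U i)) - 1) < 0 :=
        mul_neg_of_pos_of_neg (hU i) (by linarith)
      nlinarith [h4]
    calc (∑ i, ((c i - 1) * U i + c i * (dpsiMstep (θ * U i) * U i)))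
        < ∑ _i : Fin n, (0:ℝ) := Finset.sum_lt_sum_of_nonempty Finset.univ_nonempty this
      _ = 0 := by simp
  -- strict antitonicity
  have hanti : StrictAntiOn G (Set.Ioi 0) := by
    apply strictAntiOn_of_deriv_neg (convex_Ioi 0)
    · intro x hx
      exact (hG' x hx).continuousAt.continuousWithinAt
    · intro x hx
      rw [interior_Ioi] at hx
      rw [(hG' x hx).deriv]
      exact hG'neg x hx
  -- pick endpoints
  set S : ℝ := ∑ i, c i with hSdef
  have hS0 : 0 ≤ S := Finset.sum_nonneg fun i _ => (hc i).1
  have hnegA : 0 < -A := by linarith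
  set θ₁ : ℝ := B / (2 * (-A)) with hθ₁def
  set θ₂ : ℝ := (B + S + 1) / (-A) with hθ₂def
  have hθ₁pos : 0 < θ₁ := div_pos hB (by linarith)
  have hθ₂pos : 0 < θ₂ := div_pos (by linarith) hnegA
  have hθ₁₂ : θ₁ < θ₂ := by
    rw [hθ₁def, hθ₂def, div_lt_div_iff₀ (by linarith) hnegA]
    nlinarith
  have hG1 : 0 < G θ₁ := by
    have hsum : 0 ≤ ∑ i, c i * psiMstep (θ₁ * U i) :=
      Finset.sum_nonneg fun i _ =>
        mul_nonneg (hc i).1 (le_of_lt (psi_pos_mstep (mul_pos hθ₁pos (hU i))))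
    have hA0 : A ≠ 0 := ne_of_lt hA
    have hlin : θ₁ * A = -(B / 2) := by
      rw [hθ₁def]; field_simp
    have : G θ₁ = θ₁ * A + B + ∑ i, c i * psiMstep (θ₁ * U i) := rfl
    rw [this, hlin]; linarith
  have hG2 : G θ₂ < 0 := by
    have hsum : ∑ i, c i * psiMstep (θ₂ * U i) ≤ S := by
      rw [hSdef]
      apply Finset.sum_le_sum
      intro i _
      have h1 := psi_lt_one_mstep (mul_pos hθ₂pos (hU i))
      have h2 := psi_pos_mstep (mul_pos hθ₂pos (hU i))
      nlinarith [(hc i).1, (hc i).2]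
    have hA0 : A ≠ 0 := ne_of_lt hA
    have hlin : θ₂ * A = -(B + S + 1) := by
      rw [hθ₂def]; field_simp
    have : G θ₂ = θ₂ * A + B + ∑ i, c i * psiMstep (θ₂ * U i) := rfl
    rw [this, hlin]; linarith
  -- existence by IVT
  have hcont : ContinuousOn G (Set.Icc θ₁ θ₂) := by
    intro x hx
    have hxpos : 0 < x := lt_of_lt_of_le hθ₁pos hx.1
    exact (hG' x hxpos).continuousAt.continuousWithinAt
  have hIVT := intermediate_value_Icc' (le_of_lt hθ₁₂) hcont
  have h0mem : (0:ℝ) ∈ Set.Icc (G θ₂) (G θ₁) := ⟨le_of_lt hG2, le_of_lt hG1⟩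
  obtain ⟨θ, hθmem, hθeq⟩ := hIVT h0mem
  have hθpos : 0 < θ := lt_of_lt_of_le hθ₁pos hθmem.1
  refine ⟨θ, ⟨hθpos, by rw [hFG]; exact hθeq⟩, ?_⟩
  rintro θ' ⟨hθ'pos, hθ'eq⟩
  rw [hFG] at hθ'eq
  exact hanti.injOn (Set.mem_Ioi.mpr hθ'pos) (Set.mem_Ioi.mpr hθpos)
    (by rw [hθ'eq, hθeq])
end
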